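/- One-time pad secrecy-leakage bound: let G be a finite abelian group and let S, S' be G-valued random variables and W', F', Z' random variables with finite ranges, such that S is uniformly distributed on G and independent of (S', W', F', Z'). Then I(S; (S' + S, W', Z') | F') ≤ log|G| − H(S' | W', F') + I(S'; (W', Z') | F'), where + denotes the group operation in G. -/

import Mathlib

open scoped Classical
open Real

noncomputable section

namespace PA

/-- A probability mass function on a finite type, represented as a real-valued function. -/
def IsPMF {Ω : Type*} [Fintype Ω] (p : Ω → ℝ) : Prop :=
  (∀ ω, 0 ≤ p ω) ∧ (∑ ω, p ω) = 1

/-- Probability of an event under the pmf `p`. -/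
def probOf {Ω : Type*} [Fintype Ω] (p : Ω → ℝ) (E : Ω → Prop) : ℝ :=
  ∑ ω, if E ω then p ω else 0

/-- Shannon entropy (in bits, i.e. base-2 logarithm) of the random variable `X`
under the pmf `p`. -/
def ent {Ω α : Type*} [Fintype Ω] [Fintype α] (p : Ω → ℝ) (X : Ω → α) : ℝ :=
  (∑ a : α, Real.negMulLog (probOf p (fun ω => X ω = a))) / Real.log 2

/-- Conditional Shannon entropy `H(X | Z)` (in bits). -/
def condEnt {Ω α β : Type*} [Fintype Ω] [Fintype α] [Fintype β]
    (p : Ω → ℝ) (X : Ω → α) (Z : Ω → β) : ℝ :=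
  ent p (fun ω => (X ω, Z ω)) - ent p Z

/-- Mutual information `I(X;Y)` (in bits). -/
def mutInf {Ω α β : Type*} [Fintype Ω] [Fintype α] [Fintype β]
    (p : Ω → ℝ) (X : Ω → α) (Y : Ω → β) : ℝ :=
  ent p X + ent p Y - ent p (fun ω => (X ω, Y ω))

/-- Conditional mutual information `I(X;Y|Z)` (in bits). -/
def condMutInf {Ω α β γ : Type*} [Fintype Ω] [Fintype α] [Fintype β] [Fintype γ]
    (p : Ω → ℝ) (X : Ω → α) (Y : Ω → β) (Z : Ω → γ) : ℝ :=
  ent p (fun ω => (X ω, Z ω)) + ent p (fun ω => (Y ω, Z ω))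
    - ent p (fun ω => (X ω, Y ω, Z ω)) - ent p Z

/-- `X` and `Y` are conditionally independent given `M`, i.e. `X − M − Y` forms a
Markov chain. -/
def CondIndep {Ω α β γ : Type*} [Fintype Ω]
    (p : Ω → ℝ) (X : Ω → α) (M : Ω → β) (Y : Ω → γ) : Prop :=
  ∀ x m y,
    probOf p (fun ω => X ω = x ∧ M ω = m ∧ Y ω = y) * probOf p (fun ω => M ω = m)
      = probOf p (fun ω => X ω = x ∧ M ω = m) * probOf p (fun ω => M ω = m ∧ Y ω = y)

end PA

open PA

/- The key `S` is uniform and independent of `(S', W', Z', F')`, so the padded secret `S' + S` is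
uniform and independent of `(W', Z', F')`, and `(S, S' + S)` determines `(S, S')`. Each of the three
joint entropies involving `S` or `S' + S` therefore splits off `log |G|`, and what remains of the
claim is `I(S'; W' | F') ≥ 0`, the submodularity of entropy, which comes from `log t ≤ t - 1`. -/

namespace PA

variable {Ω α β γ : Type*} [Fintype Ω] {p : Ω → ℝ}

def Indep (p : Ω → ℝ) (X : Ω → α) (Y : Ω → β) : Prop :=
  ∀ a b, probOf p (fun ω => X ω = a ∧ Y ω = b)
    = probOf p (fun ω => X ω = a) * probOf p (fun ω => Y ω = b)

def IsUniform [Fintype α] (p : Ω → ℝ) (X : Ω → α) : Prop :=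
  ∀ a, probOf p (fun ω => X ω = a) = 1 / (Fintype.card α : ℝ)

lemma probOf_congr {E F : Ω → Prop} (h : ∀ ω, E ω ↔ F ω) : probOf p E = probOf p F :=
  Finset.sum_congr rfl fun ω _ => if_congr (h ω) rfl rfl

lemma probOf_nonneg (hp : ∀ ω, 0 ≤ p ω) (E : Ω → Prop) : 0 ≤ probOf p E :=
  Finset.sum_nonneg fun ω _ => by split <;> simp [hp ω]

lemma probOf_eq_sum_probOf_and [Fintype α] (X : Ω → α) (E : Ω → Prop) :
    probOf p E = ∑ a, probOf p (fun ω => X ω = a ∧ E ω) := by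
  unfold probOf
  rw [Finset.sum_comm]
  refine Finset.sum_congr rfl fun ω _ => ?_
  by_cases h : E ω <;> simp [h]

lemma probOf_true (hp : IsPMF p) : probOf p (fun _ => True) = 1 := by
  simpa [probOf] using hp.2

lemma sum_probOf_eq_one [Fintype α] (hp : IsPMF p) (X : Ω → α) :
    ∑ a, probOf p (fun ω => X ω = a) = 1 := by
  simpa using (probOf_eq_sum_probOf_and X (fun _ => True)).symm.trans (probOf_true hp)

lemma Indep.comp_right [Fintype β] {X : Ω → α} {Y : Ω → β} (h : Indep p X Y) (f : β → γ) :
    Indep p X (fun ω => f (Y ω)) := by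
  intro a c
  rw [probOf_eq_sum_probOf_and Y, probOf_eq_sum_probOf_and Y (fun ω => f (Y ω) = c),
    Finset.mul_sum]
  refine Finset.sum_congr rfl fun b _ => ?_
  by_cases hb : f b = c
  · rw [probOf_congr (E := fun ω => Y ω = b ∧ X ω = a ∧ f (Y ω) = c)
        (F := fun ω => X ω = a ∧ Y ω = b) (by grind),
      probOf_congr (E := fun ω => Y ω = b ∧ f (Y ω) = c) (F := fun ω => Y ω = b) (by grind), h]
  · rw [probOf_congr (F := fun _ => False) (by grind),
      probOf_congr (E := fun ω => Y ω = b ∧ f (Y ω) = c) (F := fun _ => False) (by grind)]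
    simp [probOf]

lemma ent_eq_of_injective [Fintype α] [Fintype β] {X : Ω → α} {Y : Ω → β} {f : α → β}
    (hf : Function.Injective f) (hY : ∀ ω, Y ω = f (X ω)) : ent p Y = ent p X := by
  unfold ent
  congr 1
  calc ∑ b, negMulLog (probOf p (fun ω => Y ω = b))
      = ∑ b ∈ Finset.univ.image f, negMulLog (probOf p (fun ω => Y ω = b)) := by
        refine (Finset.sum_subset (Finset.subset_univ _) fun b _ hb => ?_).symm
        rw [probOf_congr (F := fun _ => False) (by simp_all)]
        simp [probOf]
    _ = ∑ a, negMulLog (probOf p (fun ω => X ω = a)) := by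
        rw [Finset.sum_image fun a _ a' _ => @hf a a']
        refine Finset.sum_congr rfl fun a _ => ?_
        rw [probOf_congr fun ω => by rw [hY, hf.eq_iff]]

lemma ent_pair_of_indep [Fintype α] [Fintype β] (hp : IsPMF p) {X : Ω → α} {Y : Ω → β}
    (h : Indep p X Y) : ent p (fun ω => (X ω, Y ω)) = ent p X + ent p Y := by
  unfold ent
  rw [← add_div, Fintype.sum_prod_type]
  congr 1
  calc ∑ a, ∑ b, negMulLog (probOf p (fun ω => (X ω, Y ω) = (a, b)))
      = ∑ a, ∑ b, (probOf p (fun ω => Y ω = b) * negMulLog (probOf p (fun ω => X ω = a))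
          + probOf p (fun ω => X ω = a) * negMulLog (probOf p (fun ω => Y ω = b))) := by
        refine Finset.sum_congr rfl fun a _ => Finset.sum_congr rfl fun b _ => ?_
        rw [← negMulLog_mul, ← h, probOf_congr fun _ => Prod.ext_iff]
    _ = _ := by
        simp only [Finset.sum_add_distrib, ← Finset.sum_mul, ← Finset.mul_sum,
          sum_probOf_eq_one hp, one_mul]

lemma ent_of_isUniform [Fintype α] {X : Ω → α} (h : IsUniform p X) :
    ent p X = log (Fintype.card α) / log 2 := by
  unfold ent
  rw [Finset.sum_congr rfl fun a _ => congrArg negMulLog (h a)]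
  rcases eq_or_ne (Fintype.card α : ℝ) 0 with h0 | h0
  · simp [h0]
  · simp only [negMulLog, one_div, log_inv, mul_neg, neg_mul, neg_neg, Finset.sum_const,
      Finset.card_univ, nsmul_eq_mul]
    field_simp

lemma ent_pair_of_isUniform_of_indep [Fintype α] [Fintype β] (hp : IsPMF p)
    {X : Ω → α} {Y : Ω → β} (hX : IsUniform p X) (h : Indep p X Y) :
    ent p (fun ω => (X ω, Y ω)) = log (Fintype.card α) / log 2 + ent p Y := by
  rw [ent_pair_of_indep hp h, ent_of_isUniform hX]

section OneTimePad

variable [AddCommGroup α] [Fintype α] {S X : Ω → α}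

lemma probOf_add_eq_and_eq {V : Ω → β} (hS : IsUniform p S)
    (h : Indep p S (fun ω => (X ω, V ω))) (u : α) (v : β) :
    probOf p (fun ω => X ω + S ω = u ∧ V ω = v)
      = 1 / Fintype.card α * probOf p (fun ω => V ω = v) := by
  rw [probOf_eq_sum_probOf_and X, probOf_eq_sum_probOf_and X (fun ω => V ω = v), Finset.mul_sum]
  refine Finset.sum_congr rfl fun x _ => ?_
  rw [probOf_congr (F := fun ω => S ω = u - x ∧ (X ω, V ω) = (x, v)) fun ω => by grind, h, hS,
    probOf_congr fun _ => Prod.ext_iff]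

lemma IsUniform.add (hp : IsPMF p) (hS : IsUniform p S) (h : Indep p S X) :
    IsUniform p (fun ω => X ω + S ω) := by
  intro u
  simpa [probOf_true hp] using probOf_add_eq_and_eq hS (h.comp_right fun x => (x, ())) u ()

lemma Indep.add [Fintype β] {V : Ω → β} (hp : IsPMF p) (hS : IsUniform p S)
    (h : Indep p S (fun ω => (X ω, V ω))) : Indep p (fun ω => X ω + S ω) V := by
  intro u v
  rw [probOf_add_eq_and_eq hS h, hS.add hp (h.comp_right Prod.fst)]

end OneTimePad

lemma mul_log_add_mul_log_le {r x y m : ℝ} (hr : 0 ≤ r) (hx : r ≤ x) (hy : r ≤ y) (hm : 0 < m) :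
    r * log x + r * log y ≤ r * log r + r * log m + x * y / m - r := by
  rcases hr.eq_or_lt with rfl | hr
  · simp only [zero_mul, zero_add, sub_zero]
    exact div_nonneg (mul_nonneg hx hy) hm.le
  · have hx : 0 < x := hr.trans_le hx
    have hy : 0 < y := hr.trans_le hy
    have hlog := mul_le_mul_of_nonneg_left
      (log_le_sub_one_of_pos (show 0 < x * y / (r * m) by positivity)) hr.le
    rw [log_div (by positivity) (by positivity), log_mul (by positivity) (by positivity),
      log_mul hr.ne' hm.ne'] at hlog
    have : r * (x * y / (r * m) - 1) = x * y / m - r := by field_simp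
    linarith

-- `I(A; B) ≥ 0` for a joint mass `r` that need not be normalised.
lemma sum_sum_negMulLog_add_negMulLog_le [Fintype α] [Fintype β] (r : α → β → ℝ)
    (hr : ∀ a b, 0 ≤ r a b) :
    ∑ a, ∑ b, negMulLog (r a b) + negMulLog (∑ a, ∑ b, r a b)
      ≤ ∑ a, negMulLog (∑ b, r a b) + ∑ b, negMulLog (∑ a, r a b) := by
  have hrow : ∀ a, 0 ≤ ∑ b, r a b := fun a => Finset.sum_nonneg fun b _ => hr a b
  rcases (Finset.sum_nonneg fun a _ => hrow a).eq_or_lt with hm | hm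
  · have hr0 : ∀ a b, r a b = 0 := fun a b =>
      (Finset.sum_eq_zero_iff_of_nonneg fun b _ => hr a b).1
        ((Finset.sum_eq_zero_iff_of_nonneg fun a _ => hrow a).1 hm.symm a (Finset.mem_univ a))
        b (Finset.mem_univ b)
    simp [hr0]
  have key := Finset.sum_le_sum fun a (_ : a ∈ Finset.univ) => Finset.sum_le_sum
    fun b (_ : b ∈ Finset.univ) => mul_log_add_mul_log_le (hr a b)
      (Finset.single_le_sum (fun b _ => hr a b) (Finset.mem_univ b))
      (Finset.single_le_sum (fun a _ => hr a b) (Finset.mem_univ a)) hm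
  have hcol : ∑ a, ∑ b, r a b * log (∑ a', r a' b) = ∑ b, (∑ a, r a b) * log (∑ a, r a b) := by
    rw [Finset.sum_comm]
    simp only [Finset.sum_mul]
  have hprod : ∑ a, ∑ b, (∑ b', r a b') * ∑ a', r a' b = (∑ a, ∑ b, r a b) * ∑ a, ∑ b, r a b := by
    rw [← Finset.sum_mul_sum]
    exact congrArg _ Finset.sum_comm
  simp only [Finset.sum_add_distrib, Finset.sum_sub_distrib, ← Finset.sum_mul, ← Finset.sum_div,
    hcol, hprod, mul_div_cancel_right₀ _ hm.ne'] at key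
  simp only [negMulLog, neg_mul, Finset.sum_neg_distrib]
  linarith

lemma ent_submodular [Fintype α] [Fintype β] [Fintype γ] (hp : ∀ ω, 0 ≤ p ω)
    (X : Ω → α) (Y : Ω → β) (Z : Ω → γ) :
    ent p (fun ω => (X ω, Y ω, Z ω)) + ent p Z
      ≤ ent p (fun ω => (X ω, Z ω)) + ent p (fun ω => (Y ω, Z ω)) := by
  set q : γ → α → β → ℝ := fun c a b => probOf p (fun ω => X ω = a ∧ Y ω = b ∧ Z ω = c)
  have hXYZ : ∀ a b c, probOf p (fun ω => (X ω, Y ω, Z ω) = (a, b, c)) = q c a b :=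
    fun a b c => probOf_congr fun ω => by simp
  have hXZ : ∀ a c, probOf p (fun ω => (X ω, Z ω) = (a, c)) = ∑ b, q c a b := fun a c => by
    rw [probOf_eq_sum_probOf_and Y]
    exact Finset.sum_congr rfl fun b _ => probOf_congr fun ω => by grind
  have hYZ : ∀ b c, probOf p (fun ω => (Y ω, Z ω) = (b, c)) = ∑ a, q c a b := fun b c => by
    rw [probOf_eq_sum_probOf_and X]
    exact Finset.sum_congr rfl fun a _ => probOf_congr fun ω => by grind
  have hZ : ∀ c, probOf p (fun ω => Z ω = c) = ∑ a, ∑ b, q c a b := fun c => by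
    rw [probOf_eq_sum_probOf_and X]
    refine Finset.sum_congr rfl fun a _ => ?_
    rw [probOf_eq_sum_probOf_and Y]
    exact Finset.sum_congr rfl fun b _ => probOf_congr fun ω => by grind
  have key := Finset.sum_le_sum fun c (_ : c ∈ Finset.univ) =>
    sum_sum_negMulLog_add_negMulLog_le (q c) fun a b => probOf_nonneg hp _
  unfold ent
  rw [← add_div, ← add_div, div_le_div_iff_of_pos_right (log_pos one_lt_two)]
  simp only [Fintype.sum_prod_type, hXYZ, hXZ, hYZ, hZ]
  simp only [Finset.sum_add_distrib] at key
  have e1 : ∑ c, ∑ a, ∑ b, negMulLog (q c a b) = ∑ a, ∑ b, ∑ c, negMulLog (q c a b) := by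
    rw [Finset.sum_comm]
    exact Finset.sum_congr rfl fun a _ => Finset.sum_comm
  rwa [e1, Finset.sum_comm (s := Finset.univ (α := γ)) (t := Finset.univ (α := α)),
    Finset.sum_comm (s := Finset.univ (α := γ)) (t := Finset.univ (α := β))] at key

end PA

/-- One-time pad secrecy-leakage bound. -/
theorem one_time_pad_secrecy_leakage_bound
    {Ω G WT FT ZT : Type*} [Fintype Ω] [Fintype G] [AddCommGroup G]
    [Fintype WT] [Fintype FT] [Fintype ZT]
    (p : Ω → ℝ) (hp : IsPMF p)
    (S S' : Ω → G) (W' : Ω → WT) (F' : Ω → FT) (Z' : Ω → ZT)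
    (hUnif : ∀ g : G, probOf p (fun ω => S ω = g) = 1 / (Fintype.card G : ℝ))
    (hInd : ∀ (g : G) (t : G × WT × FT × ZT),
      probOf p (fun ω => S ω = g ∧ (S' ω, W' ω, F' ω, Z' ω) = t)
        = probOf p (fun ω => S ω = g)
          * probOf p (fun ω => (S' ω, W' ω, F' ω, Z' ω) = t)) :
    condMutInf p S (fun ω => (S' ω + S ω, W' ω, Z' ω)) F'
      ≤ Real.log (Fintype.card G) / Real.log 2
        - condEnt p S' (fun ω => (W' ω, F' ω))
        + condMutInf p S' (fun ω => (W' ω, Z' ω)) F' := by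
  have hS : IsUniform p S := hUnif
  have hT : Indep p S (fun ω => (S' ω, (W' ω, Z' ω), F' ω)) :=
    Indep.comp_right hInd fun t => (t.1, (t.2.1, t.2.2.2), t.2.2.1)
  have hSF : ent p (fun ω => (S ω, F' ω)) = log (Fintype.card G) / log 2 + ent p F' :=
    ent_pair_of_isUniform_of_indep hp hS (hT.comp_right fun t => t.2.2)
  have hUF : ent p (fun ω => ((S' ω + S ω, W' ω, Z' ω), F' ω))
      = log (Fintype.card G) / log 2 + ent p (fun ω => ((W' ω, Z' ω), F' ω)) := by
    refine (ent_eq_of_injective (X := fun ω => (S' ω + S ω, (W' ω, Z' ω), F' ω))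
      (Equiv.prodAssoc _ _ _).symm.injective fun _ => rfl).trans ?_
    exact ent_pair_of_isUniform_of_indep hp (hS.add hp (hT.comp_right Prod.fst)) (hT.add hp hS)
  have hSUF : ent p (fun ω => (S ω, (S' ω + S ω, W' ω, Z' ω), F' ω))
      = log (Fintype.card G) / log 2 + ent p (fun ω => (S' ω, (W' ω, Z' ω), F' ω)) := by
    have hinj : Function.Injective fun t : G × G × (WT × ZT) × FT =>
        (t.1, (t.2.1 + t.1, t.2.2.1), t.2.2.2) := by
      rintro ⟨s₁, s₁', v₁, f₁⟩ ⟨s₂, s₂', v₂, f₂⟩ h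
      simp only [Prod.mk.injEq] at h
      obtain ⟨rfl, ⟨h, rfl⟩, rfl⟩ := h
      rw [add_right_cancel h]
    refine (ent_eq_of_injective (X := fun ω => (S ω, S' ω, (W' ω, Z' ω), F' ω))
      hinj fun _ => rfl).trans ?_
    exact ent_pair_of_isUniform_of_indep hp hS hT
  have hsub := ent_submodular hp.1 S' W' F'
  simp only [condMutInf, condEnt]
  linarith
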